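/- Let Δ be a φ-saturated set of intuitionistic formulas in IPL (the logic generated by H_IPL). Then the associated function v_Δ is a valuation over the Nmatrix M_IPL belonging to Val₊(M_IPL), and for every formula α, v_Δ(α) = T if and only if α ∈ Δ. -/
import Mathlib


/-- Intuitionistic formulas over signature Ω = {¬, →, ∨, ∧}. -/
inductive IF
  | var : ℕ → IF
  | neg : IF → IF
  | imp : IF → IF → IF
  | dis : IF → IF → IF
  | con : IF → IF → IF
deriving DecidableEq

/-- The three intuitionistic truth values F, U, T. -/
inductive VI
  | F | U | T
deriving DecidableEq

def inegOp : VI → Set VI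
  | .F => {.U, .T}
  | .U => {.U, .T}
  | .T => {.F}

def iimpOp : VI → VI → Set VI
  | .T, .T => {.T}
  | .T, _ => {.F}
  | _, .T => {.T}
  | _, _ => {.U, .T}

def idisOp : VI → VI → Set VI
  | .T, _ => {.T}
  | _, .T => {.T}
  | _, _ => {.F}

def iconOp : VI → VI → Set VI
  | .T, .T => {.T}
  | _, _ => {.F}

/-- Valuations over the Nmatrix M_IPL. -/
def IsValI (v : IF → VI) : Prop :=
  (∀ α, v (.neg α) ∈ inegOp (v α)) ∧
  (∀ α β, v (.imp α β) ∈ iimpOp (v α) (v β)) ∧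
  (∀ α β, v (.dis α β) ∈ idisOp (v α) (v β)) ∧
  (∀ α β, v (.con α β) ∈ iconOp (v α) (v β))

/-- Val₊(M_IPL): valuations taking only values T, F on propositional variables. -/
def ValPlus : Set (IF → VI) :=
  {v | IsValI v ∧ ∀ n, v (.var n) = VI.T ∨ v (.var n) = VI.F}

/-- Complexity of an intuitionistic formula. -/
def co : IF → ℕ
  | .var _ => 0
  | .neg α => co α + 1
  | .imp α β => co α + co β + 1
  | .dis α β => co α + co β + 1
  | .con α β => co α + co β + 1

/-- The levels L_k for IPL. -/
def LevelI : ℕ → Set (IF → VI)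
  | 0 => ValPlus
  | (k+1) => {v ∈ LevelI k | ∀ α, co α ≤ k + 1 → v α = VI.U →
      ∃ w ∈ LevelI k, w α = VI.F ∧ ∀ β, v β = VI.T → w β = VI.T}

/-- Intuitionistic level valuations L_IPL = ⋂_{k ≥ 0} L_k. -/
def LIPL : Set (IF → VI) := ⋂ k, LevelI k

/-- The consequence relation Γ ⊢_IPL φ of the Hilbert calculus H_IPL. -/
inductive IDeriv (Γ : Set IF) : IF → Prop
  | prem {φ : IF} : φ ∈ Γ → IDeriv Γ φ
  | ax1 (α β : IF) : IDeriv Γ (α.imp (β.imp α))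
  | ax2 (α β γ : IF) : IDeriv Γ ((α.imp (β.imp γ)).imp ((α.imp β).imp (α.imp γ)))
  | ax3 (α β : IF) : IDeriv Γ (α.imp (β.imp (α.con β)))
  | ax4 (α β : IF) : IDeriv Γ ((α.con β).imp α)
  | ax5 (α β : IF) : IDeriv Γ ((α.con β).imp β)
  | ax6 (α β : IF) : IDeriv Γ (α.imp (α.dis β))
  | ax7 (α β : IF) : IDeriv Γ (β.imp (α.dis β))
  | ax8 (α β γ : IF) : IDeriv Γ ((α.imp γ).imp ((β.imp γ).imp ((α.dis β).imp γ)))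
  | ax9 (α β : IF) : IDeriv Γ ((β.imp α).imp ((β.imp α.neg).imp β.neg))
  | ax10 (α β : IF) : IDeriv Γ (α.imp (α.neg.imp β))
  | mp {α β : IF} : IDeriv Γ (α.imp β) → IDeriv Γ α → IDeriv Γ β

/-- Δ is φ-saturated (w.r.t. ⊢_IPL). -/
def ISat (Δ : Set IF) (φ : IF) : Prop :=
  ¬ IDeriv Δ φ ∧ ∀ α ∉ Δ, IDeriv (insert α Δ) φ

open Classical in
/-- The valuation v_Δ associated to a φ-saturated set Δ in IPL. -/
noncomputable def vDeltaI (Δ : Set IF) : IF → VI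
  | .var n => if IF.var n ∈ Δ then VI.T else VI.F
  | .neg α => if IF.neg α ∈ Δ then VI.T else if α ∈ Δ then VI.F else VI.U
  | .imp α β => if IF.imp α β ∈ Δ then VI.T else if α ∈ Δ then VI.F else VI.U
  | .con α β => if α ∈ Δ ∧ β ∈ Δ then VI.T else VI.F
  | .dis α β => if α ∈ Δ ∨ β ∈ Δ then VI.T else VI.F

/-- Λ is closed under (immediate, hence all) subformulas. -/
def SubClosedI (Λ : Set IF) : Prop :=
  (∀ α, IF.neg α ∈ Λ → α ∈ Λ) ∧
  (∀ α β, IF.imp α β ∈ Λ → α ∈ Λ ∧ β ∈ Λ) ∧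
  (∀ α β, IF.dis α β ∈ Λ → α ∈ Λ ∧ β ∈ Λ) ∧
  (∀ α β, IF.con α β ∈ Λ → α ∈ Λ ∧ β ∈ Λ)

/-- Intuitionistic partial valuations with domain Λ (modelled as total functions
constrained on Λ). -/
def IsPValI (Λ : Set IF) (v : IF → VI) : Prop :=
  (∀ n, IF.var n ∈ Λ → v (.var n) = VI.T ∨ v (.var n) = VI.F) ∧
  (∀ α, IF.neg α ∈ Λ → v (.neg α) ∈ inegOp (v α)) ∧
  (∀ α β, IF.imp α β ∈ Λ → v (.imp α β) ∈ iimpOp (v α) (v β)) ∧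
  (∀ α β, IF.dis α β ∈ Λ → v (.dis α β) ∈ idisOp (v α) (v β)) ∧
  (∀ α β, IF.con α β ∈ Λ → v (.con α β) ∈ iconOp (v α) (v β))

/-- iPLV'(Λ): intuitionistic partial' level valuations over Λ. -/
def iPLV' (Λ : Set IF) : Set (IF → VI) :=
  {v | IsPValI Λ v ∧ ∀ α ∈ Λ, v α = VI.U →
    ∃ w ∈ LIPL, w α = VI.F ∧ ∀ β ∈ Λ, v β = VI.T → w β = VI.T}

/-- iPLV(Λ): intuitionistic partial level valuations over Λ, defined as the largest
subset of iPV(Λ) whose condition is witnessed inside itself. -/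
def iPLV (Λ : Set IF) : Set (IF → VI) :=
  ⋃₀ {S | (∀ v ∈ S, IsPValI Λ v) ∧
      ∀ v ∈ S, ∀ α ∈ Λ, v α = VI.U →
        ∃ w ∈ S, w α = VI.F ∧ ∀ β ∈ Λ, v β = VI.T → w β = VI.T}

/-- Set of subformulas of an intuitionistic formula. -/
def IF.subf : IF → Finset IF
  | .var n => {.var n}
  | .neg α => insert (.neg α) α.subf
  | .imp α β => insert (.imp α β) (α.subf ∪ β.subf)
  | .dis α β => insert (.dis α β) (α.subf ∪ β.subf)
  | .con α β => insert (.con α β) (α.subf ∪ β.subf)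

/-- Γ ⊨_iPLV φ : consequence w.r.t. the intuitionistic truth tables, over the set Λ
of subformulas of Γ ∪ {φ}. -/
def iPLVConseq (Γ : Finset IF) (φ : IF) : Prop :=
  ∀ v ∈ iPLV (↑(Γ.biUnion IF.subf ∪ φ.subf) : Set IF),
    (∀ β ∈ Γ, v β = VI.T) → v φ = VI.T

lemma IDeriv.id' (Γ : Set IF) (α : IF) : IDeriv Γ (α.imp α) :=
  (IDeriv.mp (IDeriv.mp (IDeriv.ax2 α (α.imp α) α) (IDeriv.ax1 α (α.imp α)))
    (IDeriv.ax1 α α))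

lemma IDeriv.cut {Γ : Set IF} {α β : IF} (h : IDeriv (insert α Γ) β)
    (ha : IDeriv Γ α) : IDeriv Γ β := by
  induction h with
  | prem hm =>
    rcases hm with h | h
    · exact h ▸ ha
    · exact IDeriv.prem h
  | ax1 a b => exact IDeriv.ax1 a b
  | ax2 a b c => exact IDeriv.ax2 a b c
  | ax3 a b => exact IDeriv.ax3 a b
  | ax4 a b => exact IDeriv.ax4 a b
  | ax5 a b => exact IDeriv.ax5 a b
  | ax6 a b => exact IDeriv.ax6 a b
  | ax7 a b => exact IDeriv.ax7 a b
  | ax8 a b c => exact IDeriv.ax8 a b c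
  | ax9 a b => exact IDeriv.ax9 a b
  | ax10 a b => exact IDeriv.ax10 a b
  | mp _ _ ih1 ih2 => exact IDeriv.mp ih1 ih2

lemma IDeriv.deduction {Γ : Set IF} {α β : IF} (h : IDeriv (insert α Γ) β) :
    IDeriv Γ (α.imp β) := by
  induction h with
  | prem hm =>
    rcases hm with h | h
    · exact h ▸ IDeriv.id' Γ α
    · exact IDeriv.mp (IDeriv.ax1 _ α) (IDeriv.prem h)
  | ax1 a b => exact IDeriv.mp (IDeriv.ax1 _ α) (IDeriv.ax1 a b)
  | ax2 a b c => exact IDeriv.mp (IDeriv.ax1 _ α) (IDeriv.ax2 a b c)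
  | ax3 a b => exact IDeriv.mp (IDeriv.ax1 _ α) (IDeriv.ax3 a b)
  | ax4 a b => exact IDeriv.mp (IDeriv.ax1 _ α) (IDeriv.ax4 a b)
  | ax5 a b => exact IDeriv.mp (IDeriv.ax1 _ α) (IDeriv.ax5 a b)
  | ax6 a b => exact IDeriv.mp (IDeriv.ax1 _ α) (IDeriv.ax6 a b)
  | ax7 a b => exact IDeriv.mp (IDeriv.ax1 _ α) (IDeriv.ax7 a b)
  | ax8 a b c => exact IDeriv.mp (IDeriv.ax1 _ α) (IDeriv.ax8 a b c)
  | ax9 a b => exact IDeriv.mp (IDeriv.ax1 _ α) (IDeriv.ax9 a b)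
  | ax10 a b => exact IDeriv.mp (IDeriv.ax1 _ α) (IDeriv.ax10 a b)
  | mp _ _ ih1 ih2 => exact IDeriv.mp (IDeriv.mp (IDeriv.ax2 _ _ _) ih1) ih2

section Sat
variable {Δ : Set IF} {φ : IF} (h : ISat Δ φ)
include h

lemma ISat.mem_of_deriv {α : IF} (hd : IDeriv Δ α) : α ∈ Δ := by
  by_contra hn
  exact h.1 (IDeriv.cut (h.2 α hn) hd)

lemma ISat.not_both {α : IF} (h1 : α ∈ Δ) (h2 : α.neg ∈ Δ) : False :=
  h.1 (IDeriv.mp (IDeriv.mp (IDeriv.ax10 α φ) (IDeriv.prem h1)) (IDeriv.prem h2))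

lemma ISat.dis_prop {α β : IF} (hd : α.dis β ∈ Δ) : α ∈ Δ ∨ β ∈ Δ := by
  by_contra hn
  push_neg at hn
  have h1 : IDeriv Δ (α.imp φ) := IDeriv.deduction (h.2 α hn.1)
  have h2 : IDeriv Δ (β.imp φ) := IDeriv.deduction (h.2 β hn.2)
  exact h.1 (IDeriv.mp (IDeriv.mp (IDeriv.mp (IDeriv.ax8 α β φ) h1) h2)
    (IDeriv.prem hd))

lemma ISat.mp_mem {α β : IF} (h1 : α.imp β ∈ Δ) (h2 : α ∈ Δ) : β ∈ Δ :=
  h.mem_of_deriv (IDeriv.mp (IDeriv.prem h1) (IDeriv.prem h2))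

end Sat

open Classical in
lemma vD_var (Δ : Set IF) (n : ℕ) :
    vDeltaI Δ (.var n) = if IF.var n ∈ Δ then VI.T else VI.F := rfl
open Classical in
lemma vD_neg (Δ : Set IF) (α : IF) :
    vDeltaI Δ (.neg α) = if IF.neg α ∈ Δ then VI.T
      else if α ∈ Δ then VI.F else VI.U := rfl
open Classical in
lemma vD_imp (Δ : Set IF) (α β : IF) :
    vDeltaI Δ (.imp α β) = if IF.imp α β ∈ Δ then VI.T
      else if α ∈ Δ then VI.F else VI.U := rfl
open Classical in
lemma vD_dis (Δ : Set IF) (α β : IF) :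
    vDeltaI Δ (.dis α β) = if α ∈ Δ ∨ β ∈ Δ then VI.T else VI.F := rfl
open Classical in
lemma vD_con (Δ : Set IF) (α β : IF) :
    vDeltaI Δ (.con α β) = if α ∈ Δ ∧ β ∈ Δ then VI.T else VI.F := rfl

/-- the valuation v_Δ of a φ-saturated set Δ in IPL belongs to
Val₊(M_IPL) and satisfies v_Δ(α) = T iff α ∈ Δ. -/
theorem vDeltaI_valPlus (Δ : Set IF) (φ : IF) (h : ISat Δ φ) :
    vDeltaI Δ ∈ ValPlus ∧ ∀ α, (vDeltaI Δ α = VI.T ↔ α ∈ Δ) := by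
  classical
  have hT : ∀ α, (vDeltaI Δ α = VI.T ↔ α ∈ Δ) := by
    intro α
    cases α with
    | var n => rw [vD_var]; by_cases hn : IF.var n ∈ Δ <;> simp [hn]
    | neg a =>
      rw [vD_neg]
      by_cases h1 : IF.neg a ∈ Δ
      · simp [h1]
      · by_cases h2 : a ∈ Δ <;> simp [h1, h2]
    | imp a b =>
      rw [vD_imp]
      by_cases h1 : IF.imp a b ∈ Δ
      · simp [h1]
      · by_cases h2 : a ∈ Δ <;> simp [h1, h2]
    | dis a b =>
      rw [vD_dis]
      by_cases h1 : a ∈ Δ ∨ b ∈ Δ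
      · simp only [if_pos h1, true_iff]
        rcases h1 with h1 | h1
        · exact h.mem_of_deriv (IDeriv.mp (IDeriv.ax6 a b) (IDeriv.prem h1))
        · exact h.mem_of_deriv (IDeriv.mp (IDeriv.ax7 a b) (IDeriv.prem h1))
      · rw [if_neg h1]
        constructor
        · intro hc; cases hc
        · intro hmem; exact absurd (h.dis_prop hmem) h1
    | con a b =>
      rw [vD_con]
      by_cases h1 : a ∈ Δ ∧ b ∈ Δ
      · simp only [if_pos h1, true_iff]
        exact h.mem_of_deriv (IDeriv.mp (IDeriv.mp (IDeriv.ax3 a b)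
          (IDeriv.prem h1.1)) (IDeriv.prem h1.2))
      · rw [if_neg h1]
        constructor
        · intro hc; cases hc
        · intro hmem
          exact absurd ⟨h.mp_mem (h.mem_of_deriv (IDeriv.ax4 a b)) hmem,
            h.mp_mem (h.mem_of_deriv (IDeriv.ax5 a b)) hmem⟩ h1
  refine ⟨⟨⟨?_, ?_, ?_, ?_⟩, ?_⟩, hT⟩
  · -- neg
    intro α
    by_cases ha : α ∈ Δ
    · have h2 : α.neg ∉ Δ := fun hn => (h.not_both ha hn).elim
      rw [vD_neg, if_neg h2, if_pos ha, (hT α).mpr ha]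
      simp [inegOp]
    · have h1 : vDeltaI Δ α ≠ VI.T := fun hc => ha ((hT α).mp hc)
      have h2 : vDeltaI Δ (α.neg) = VI.T ∨ vDeltaI Δ (α.neg) = VI.U := by
        rw [vD_neg]
        by_cases hn : α.neg ∈ Δ
        · exact Or.inl (by simp [hn])
        · exact Or.inr (by simp [hn, ha])
      cases hv : vDeltaI Δ α with
      | T => exact absurd hv h1
      | F => rcases h2 with h2 | h2 <;> rw [h2] <;> simp [inegOp]
      | U => rcases h2 with h2 | h2 <;> rw [h2] <;> simp [inegOp]
  · -- imp
    intro α β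
    by_cases hb : β ∈ Δ
    · have hab : α.imp β ∈ Δ :=
        h.mem_of_deriv (IDeriv.mp (IDeriv.ax1 β α) (IDeriv.prem hb))
      rw [(hT _).mpr hab, (hT β).mpr hb]
      cases hv : vDeltaI Δ α <;> simp [iimpOp]
    · have h2 : vDeltaI Δ β ≠ VI.T := fun hc => hb ((hT β).mp hc)
      by_cases ha : α ∈ Δ
      · have hab : α.imp β ∉ Δ := fun hc => hb (h.mp_mem hc ha)
        rw [vD_imp, if_neg hab, if_pos ha, (hT α).mpr ha]
        cases hv : vDeltaI Δ β with
        | T => exact absurd hv h2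
        | F => simp [iimpOp]
        | U => simp [iimpOp]
      · have h3 : vDeltaI Δ α ≠ VI.T := fun hc => ha ((hT α).mp hc)
        have h1 : vDeltaI Δ (α.imp β) = VI.T ∨ vDeltaI Δ (α.imp β) = VI.U := by
          rw [vD_imp]
          by_cases hab : α.imp β ∈ Δ
          · exact Or.inl (by simp [hab])
          · exact Or.inr (by simp [hab, ha])
        cases hv : vDeltaI Δ α with
        | T => exact absurd hv h3
        | F =>
          cases hw : vDeltaI Δ β with
          | T => exact absurd hw h2
          | F => rcases h1 with h1 | h1 <;> rw [h1] <;> simp [iimpOp]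
          | U => rcases h1 with h1 | h1 <;> rw [h1] <;> simp [iimpOp]
        | U =>
          cases hw : vDeltaI Δ β with
          | T => exact absurd hw h2
          | F => rcases h1 with h1 | h1 <;> rw [h1] <;> simp [iimpOp]
          | U => rcases h1 with h1 | h1 <;> rw [h1] <;> simp [iimpOp]
  · -- dis
    intro α β
    by_cases hd : α ∈ Δ ∨ β ∈ Δ
    · rw [vD_dis, if_pos hd]
      rcases hd with hd | hd
      · rw [(hT α).mpr hd]
        cases hv : vDeltaI Δ β <;> simp [idisOp]
      · rw [(hT β).mpr hd]
        cases hv : vDeltaI Δ α <;> simp [idisOp]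
    · push_neg at hd
      have h2 : vDeltaI Δ α ≠ VI.T := fun hc => hd.1 ((hT α).mp hc)
      have h3 : vDeltaI Δ β ≠ VI.T := fun hc => hd.2 ((hT β).mp hc)
      rw [vD_dis, if_neg (by tauto)]
      cases hv : vDeltaI Δ α with
      | T => exact absurd hv h2
      | F =>
        cases hw : vDeltaI Δ β with
        | T => exact absurd hw h3
        | F => simp [idisOp]
        | U => simp [idisOp]
      | U =>
        cases hw : vDeltaI Δ β with
        | T => exact absurd hw h3
        | F => simp [idisOp]
        | U => simp [idisOp]
  · -- con
    intro α β
    by_cases hc : α ∈ Δ ∧ β ∈ Δ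
    · rw [vD_con, if_pos hc, (hT α).mpr hc.1, (hT β).mpr hc.2]
      simp [iconOp]
    · have hne : vDeltaI Δ α ≠ VI.T ∨ vDeltaI Δ β ≠ VI.T := by
        by_contra hn
        push_neg at hn
        exact hc ⟨(hT α).mp hn.1, (hT β).mp hn.2⟩
      rw [vD_con, if_neg hc]
      cases hv : vDeltaI Δ α <;> cases hw : vDeltaI Δ β <;>
        simp [iconOp] <;> simp_all
  · -- vars
    intro n
    rw [vD_var]
    by_cases hn : IF.var n ∈ Δ <;> simp [hn]
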